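/- arXiv:1204.6661 — 2 statements merged into one kernel-verified Lean document; each statement's English description precedes it below -/
import Mathlib

section
/- Let $R$ be a local Artin ring, $H' \xrightarrow{d_1} H \xrightarrow{d_2} H''$ a complex of finitely generated free $R$-modules (i.e. $d_2 \circ d_1 = 0$) such that both $\operatorname{im} d_1$ and $\ker d_2$ are free $R$-modules. Then the cohomology module $\ker d_2 / \operatorname{im} d_1$ is a free $R$-module. -/
/-!
Over an Artinian local ring `R` the maximal ideal `𝔪` is an associated prime, so some `s ≠ 0`
satisfies `𝔪 s = 0`. In a free module, `s • x = 0` forces every coordinate of `x` into `𝔪`.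
Hence an injection `f : N → K` with `N` free stays injective modulo `𝔪`: if `f x ∈ 𝔪 K` then
`f (s • x) = 0`, so `s • x = 0` and `x ∈ 𝔪 N`. For `N = im d₁ ⊆ K = ker d₂` with `K` finite free,
the local criterion for freeness then makes `K / N` free.
-/

section

open IsLocalRing TensorProduct

variable {R M N : Type*} [CommRing R] [AddCommGroup M] [Module R M] [AddCommGroup N] [Module R N]

theorem IsLocalRing.exists_ne_zero_mul_eq_zero_of_mem_maximalIdeal [IsLocalRing R]
    [IsArtinianRing R] :
    ∃ s : R, s ≠ 0 ∧ ∀ a ∈ maximalIdeal R, a * s = 0 := by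
  obtain ⟨P, hP⟩ := associatedPrimes.nonempty R R
  obtain ⟨hPrime, s, hPs⟩ := isAssociatedPrime_iff.mp hP
  have hPm : P = maximalIdeal R := eq_maximalIdeal hPrime.isMaximal'
  refine ⟨s, ?_, fun a ha ↦ ?_⟩
  · rintro rfl
    exact hPrime.ne_top <| (Ideal.eq_top_iff_one P).mpr <|
      hPs ▸ Submodule.mem_colon_singleton.mpr (smul_zero 1)
  · rw [← hPm, hPs, Submodule.mem_colon_singleton] at ha
    simpa using ha

theorem Submodule.smul_eq_zero_of_mem_smul_top {I : Ideal R} {s : R} (hs : ∀ a ∈ I, a * s = 0)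
    {x : M} (hx : x ∈ I • (⊤ : Submodule R M)) : s • x = 0 := by
  refine Submodule.smul_induction_on hx (fun a ha y _ ↦ ?_) (fun y z hy hz ↦ ?_)
  · rw [smul_smul, mul_comm, hs a ha, zero_smul]
  · rw [smul_add, hy, hz, add_zero]

theorem Module.Basis.mem_smul_top_of_repr_mem {ι : Type*} (b : Basis ι R M) {I : Ideal R} {x : M}
    (h : ∀ i, b.repr x i ∈ I) : x ∈ I • (⊤ : Submodule R M) := by
  rw [← b.span_eq, Submodule.mem_ideal_smul_span_iff_exists_sum]
  exact ⟨b.repr x, h, b.linearCombination_repr x⟩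

theorem Module.Free.mem_maximalIdeal_smul_top_of_smul_eq_zero [IsLocalRing R] [Module.Free R M]
    {s : R} (hs : s ≠ 0) {x : M} (hx : s • x = 0) : x ∈ maximalIdeal R • (⊤ : Submodule R M) := by
  let b := Module.Free.chooseBasis R M
  refine b.mem_smul_top_of_repr_mem fun i hunit ↦ hs ?_
  have : s * b.repr x i = 0 := by simpa using congrArg (fun y ↦ b.repr y i) hx
  exact hunit.mul_left_eq_zero.mp this

theorem LinearMap.injective_lTensor_quotient_iff (I : Ideal R) (f : M →ₗ[R] N) :
    Function.Injective (f.lTensor (R ⧸ I)) ↔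
      (I • ⊤ : Submodule R N).comap f ≤ I • ⊤ := by
  have : f.lTensor (R ⧸ I) = (quotTensorEquivQuotSMul N I).symm ∘ₗ
      (I • ⊤ : Submodule R M).mapQ (I • ⊤) f (Submodule.smul_top_le_comap_smul_top I f) ∘ₗ
      quotTensorEquivQuotSMul M I := by
    refine TensorProduct.ext' fun r x ↦ ?_
    obtain ⟨r, rfl⟩ := Ideal.Quotient.mk_surjective r
    simp [TensorProduct.smul_tmul', Algebra.smul_def]
  rw [this]
  simp only [LinearMap.coe_comp, LinearEquiv.coe_coe, EmbeddingLike.comp_injective,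
    EquivLike.injective_comp, ← LinearMap.ker_eq_bot, Submodule.ker_mapQ,
    ← LinearMap.le_ker_iff_map, Submodule.ker_mkQ]

theorem IsLocalRing.comap_maximalIdeal_smul_top_le_of_injective [IsLocalRing R] [IsArtinianRing R]
    [Module.Free R M] {f : M →ₗ[R] N} (hf : Function.Injective f) :
    (maximalIdeal R • ⊤ : Submodule R N).comap f ≤ maximalIdeal R • ⊤ := by
  nontriviality R
  obtain ⟨s, hs, hsm⟩ := exists_ne_zero_mul_eq_zero_of_mem_maximalIdeal (R := R)
  intro x hx
  refine Module.Free.mem_maximalIdeal_smul_top_of_smul_eq_zero hs (hf ?_)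
  rw [map_smul, map_zero]
  exact Submodule.smul_eq_zero_of_mem_smul_top hsm hx

theorem Module.free_quotient_of_free_of_isArtinianRing [IsLocalRing R] [IsArtinianRing R]
    [Module.Finite R N] [Module.Free R N] (P : Submodule R N) [Module.Free R P] :
    Module.Free R (N ⧸ P) :=
  Module.free_of_lTensor_residueField_injective P.subtype P.mkQ P.mkQ_surjective
    (LinearMap.exact_subtype_mkQ P)
    ((P.subtype.injective_lTensor_quotient_iff _).mpr
      (comap_maximalIdeal_smul_top_le_of_injective P.injective_subtype))

end

theorem cohomology_free_of_free_image_kernel_general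
    (R : Type*) [CommRing R] [IsLocalRing R] [IsArtinianRing R]
    (H' H H'' : Type*)
    [AddCommGroup H'] [Module R H']
    [AddCommGroup H] [Module R H] [Module.Finite R H]
    [AddCommGroup H''] [Module R H'']
    (d₁ : H' →ₗ[R] H) (d₂ : H →ₗ[R] H'')
    (hcomplex : d₂ ∘ₗ d₁ = 0)
    (him : Module.Free R (LinearMap.range d₁))
    (hker : Module.Free R (LinearMap.ker d₂)) :
    Module.Free R
      ((LinearMap.ker d₂) ⧸ (LinearMap.range d₁).comap (LinearMap.ker d₂).subtype) := by
  have hle : LinearMap.range d₁ ≤ LinearMap.ker d₂ := LinearMap.range_le_ker_iff.mpr hcomplex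
  have : Module.Free R ((LinearMap.range d₁).comap (LinearMap.ker d₂).subtype) :=
    .of_equiv (Submodule.comapSubtypeEquivOfLe hle).symm
  exact Module.free_quotient_of_free_of_isArtinianRing _

/-- **Lemma.** Let `R` be a local Artin ring and `H' → H → H''` a complex of finitely
generated free `R`-modules (`d₂ ∘ d₁ = 0`) such that `im d₁` and `ker d₂` are free.
Then the cohomology `ker d₂ / im d₁` is a free `R`-module. -/
theorem cohomology_free_of_free_image_kernel
    (R : Type*) [CommRing R] [IsLocalRing R] [IsArtinianRing R]
    (H' H H'' : Type*)
    [AddCommGroup H'] [Module R H'] [Module.Finite R H'] [Module.Free R H']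
    [AddCommGroup H] [Module R H] [Module.Finite R H] [Module.Free R H]
    [AddCommGroup H''] [Module R H''] [Module.Finite R H''] [Module.Free R H'']
    (d₁ : H' →ₗ[R] H) (d₂ : H →ₗ[R] H'')
    (hcomplex : d₂ ∘ₗ d₁ = 0)
    (him : Module.Free R (LinearMap.range d₁))
    (hker : Module.Free R (LinearMap.ker d₂)) :
    Module.Free R
      ((LinearMap.ker d₂) ⧸ (LinearMap.range d₁).comap (LinearMap.ker d₂).subtype) :=
  cohomology_free_of_free_image_kernel_general R H' H H'' d₁ d₂ hcomplex him hker
end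

section
/- Let $A$ be a reduced Noetherian ring, $\mathfrak{p} \subset A$ a minimal prime ideal, $R$ a local Artinian algebra over a field $k$ with residue field $k$, and $\mathfrak{P} \subseteq A \otimes_k R$ an ideal such that $(A \otimes_k R)/\mathfrak{P}$ is flat over $R$ and $\mathfrak{P} + \mathfrak{m}(A\otimes_k R) = \mathfrak{p}\otimes_k R + \mathfrak{m}(A\otimes_k R)$ (i.e. $(A\otimes_k R)/\mathfrak{P}$ is a flat deformation of $A/\mathfrak{p}$ over $R$). Then $\mathfrak{P} = \mathfrak{p} \otimes_k R$. -/
/-!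
Write `B = R ⊗[k] A`, `Q = p B` and `𝔪 B` for the extension of the maximal ideal `𝔪` of `R`,
which is nilpotent since `R` is Artinian.

`Q ≤ P`: for `x ∈ p`, minimality of `p` in the reduced ring `A` gives `s ∉ p` with `s x = 0`.
Multiplication by `1 ⊗ s` is injective on `B ⧸ (Q + 𝔪 B) ≅ (R ⧸ 𝔪) ⊗[k] (A ⧸ p)`, which is also
the fibre of `B ⧸ P`. By the local flatness criterion it is injective on the flat `R`-module
`B ⧸ P`, so `(1 ⊗ s)(1 ⊗ x) = 0` forces `1 ⊗ x ∈ P`.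

`P ≤ Q`: flatness of `B ⧸ P` gives `P ∩ 𝔪ʲ B = 𝔪ʲ P`, so `P ≤ Q + 𝔪 B` improves inductively to
`P ≤ Q + 𝔪ʲ B` for every `j`.
-/

open TensorProduct

section Flat

variable {R : Type*} [CommRing R]
  {M N : Type*} [AddCommGroup M] [Module R M] [AddCommGroup N] [Module R N]

namespace Ideal

variable (I : Ideal R)

variable (M) in
noncomputable def smulTensor : I ⊗[R] M →ₗ[R] M :=
  (TensorProduct.lid R M).comp (I.subtype.rTensor M)

lemma smulTensor_injective [Module.Flat R M] : Function.Injective (I.smulTensor M) := by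
  simpa [smulTensor] using Module.Flat.iff_rTensor_injective'.mp ‹_› I

lemma smulTensor_comp_lTensor (f : M →ₗ[R] N) :
    I.smulTensor N ∘ₗ f.lTensor I = f ∘ₗ I.smulTensor M := by
  ext; simp [smulTensor]

lemma range_smulTensor : LinearMap.range (I.smulTensor M) = I • ⊤ :=
  I.subtype_rTensor_range M

lemma range_smulTensor_comp_lTensor_subtype (S : Submodule R M) :
    LinearMap.range (I.smulTensor M ∘ₗ S.subtype.lTensor I) = I • S := by
  rw [smulTensor_comp_lTensor, LinearMap.range_comp, range_smulTensor, Submodule.map_smul'',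
    Submodule.map_top, Submodule.range_subtype]

lemma smulTensor_mem_smul_of_lTensor_mkQ_eq_zero (S : Submodule R M) {t : I ⊗[R] M}
    (ht : S.mkQ.lTensor I t = 0) : I.smulTensor M t ∈ I • S := by
  obtain ⟨t', rfl⟩ := (lTensor_exact I (LinearMap.exact_subtype_mkQ S) S.mkQ_surjective t).mp ht
  rw [← range_smulTensor_comp_lTensor_subtype]
  exact ⟨t', rfl⟩

lemma lTensor_mkQ_eq_zero_of_smulTensor_mem [Module.Flat R M] (S : Submodule R M)
    {t : I ⊗[R] M} (ht : I.smulTensor M t ∈ I • S) : S.mkQ.lTensor I t = 0 := by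
  rw [← range_smulTensor_comp_lTensor_subtype] at ht
  obtain ⟨t', ht'⟩ := ht
  rw [← I.smulTensor_injective ht', ← LinearMap.comp_apply, ← LinearMap.lTensor_comp,
    (LinearMap.exact_subtype_mkQ S).linearMap_comp_eq_zero, LinearMap.lTensor_zero,
    LinearMap.zero_apply]

end Ideal

namespace LinearMap

lemma lTensor_injective_of_injective_of_isMaximal {J : Ideal R} [J.IsMaximal]
    [Module (R ⧸ J) M] [IsScalarTower R (R ⧸ J) M] [Module (R ⧸ J) N] [IsScalarTower R (R ⧸ J) N]
    {f : M →ₗ[R] N} (hf : Function.Injective f) (P : Type*) [AddCommGroup P] [Module R P] :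
    Function.Injective (f.lTensor P) := by
  let := Ideal.Quotient.field J
  obtain ⟨g, hg⟩ := (f.extendScalarsOfSurjective (S := R ⧸ J)
    Ideal.Quotient.mk_surjective).exists_leftInverse_of_injective (ker_eq_bot.mpr hf)
  have hgf : g.restrictScalars R ∘ₗ f = id := congr(restrictScalars R $hg)
  refine Function.LeftInverse.injective (g := (g.restrictScalars R).lTensor P) fun t => ?_
  rw [← comp_apply, ← lTensor_comp, hgf, lTensor_id, id_apply]

variable {J : Ideal R} [J.IsMaximal] [Module.Flat R N] {u : M →ₗ[R] N}
  (hu : (J • ⊤ : Submodule R N).comap u ≤ J • ⊤)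
include hu

/-- Through `I ⊗ N ≅ I • N` this reduces to the injectivity of `I ⊗ (M ⧸ J M) → I ⊗ (N ⧸ J N)`,
which holds because `M ⧸ J M → N ⧸ J N` is an injection of `R ⧸ J`-vector spaces. -/
lemma mem_smul_smul_top_of_apply_mem (I : Ideal R) {z : M} (hz : z ∈ I • (⊤ : Submodule R M))
    (huz : u z ∈ I • J • (⊤ : Submodule R N)) : z ∈ I • J • (⊤ : Submodule R M) := by
  obtain ⟨t, rfl⟩ : z ∈ range (I.smulTensor M) := by rwa [Ideal.range_smulTensor]
  have hubar :
      Function.Injective (Submodule.mapQ _ _ u (Submodule.smul_top_le_comap_smul_top J u)) := by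
    rw [← ker_eq_bot, Submodule.ker_mapQ, eq_bot_iff]
    exact (Submodule.map_mono hu).trans (Submodule.mkQ_map_self _).le
  have hut : (J • ⊤ : Submodule R N).mkQ.lTensor I (u.lTensor I t) = 0 := by
    refine I.lTensor_mkQ_eq_zero_of_smulTensor_mem _ ?_
    rwa [← comp_apply, Ideal.smulTensor_comp_lTensor]
  refine I.smulTensor_mem_smul_of_lTensor_mkQ_eq_zero _
    (lTensor_injective_of_injective_of_isMaximal (J := J) hubar I ?_)
  rw [← comp_apply, ← lTensor_comp, Submodule.mapQ_mkQ, lTensor_comp, comp_apply, hut, map_zero]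

theorem injective_of_comap_smul_top_le_of_flat (hJ : IsNilpotent J) : Function.Injective u := by
  have hker (j : ℕ) : ker u ≤ J ^ j • ⊤ := by
    induction j with
    | zero => simp
    | succ j ih =>
      intro z hz
      rw [pow_succ, Submodule.mul_smul]
      exact mem_smul_smul_top_of_apply_mem hu _ (ih hz) (by rw [mem_ker.mp hz]; exact zero_mem _)
  obtain ⟨n, hn⟩ := hJ
  rw [← ker_eq_bot, eq_bot_iff]
  simpa [hn] using hker n

end LinearMap

theorem Submodule.eq_of_le_of_le_sup_smul_top_of_flat {N N' : Submodule R M} {I : Ideal R}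
    (hI : IsNilpotent I) [Module.Flat R (M ⧸ N)] (hle : N' ≤ N) (h : N ≤ N' ⊔ I • ⊤) :
    N' = N := by
  have hsmul (j : ℕ) : I ^ j • ⊤ ⊓ N = I ^ j • N := by
    simpa [inf_comm] using LinearMap.ker_inf_smul_top_eq_smul_of_flat (I ^ j) N.mkQ N.mkQ_surjective
  have hj (j : ℕ) : N ≤ N' ⊔ I ^ j • ⊤ := by
    induction j with
    | zero => simp
    | succ j ih =>
      calc N = N' ⊔ I ^ j • ⊤ ⊓ N := by rw [← sup_inf_assoc_of_le _ hle, inf_eq_right.mpr ih]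
        _ = N' ⊔ I ^ j • N := by rw [hsmul]
        _ ≤ N' ⊔ I ^ j • (N' ⊔ I • ⊤) := sup_le_sup_left (Submodule.smul_mono le_rfl h) _
        _ ≤ N' ⊔ I ^ (j + 1) • ⊤ := by
          rw [Submodule.smul_sup, ← sup_assoc, pow_succ, Submodule.mul_smul]
          exact sup_le_sup_right (sup_le le_rfl Submodule.smul_le_right) _
  obtain ⟨n, hn⟩ := hI
  exact le_antisymm hle (by simpa [hn] using hj n)

variable {S : Type*} [CommRing S] [Algebra R S]

theorem Ideal.eq_of_le_of_le_sup_map_of_flat {P Q : Ideal S} {I : Ideal R} (hI : IsNilpotent I)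
    [Module.Flat R (S ⧸ P)] (hQP : Q ≤ P) (h : P ≤ Q ⊔ I.map (algebraMap R S)) : Q = P := by
  have : Module.Flat R (S ⧸ P.restrictScalars R) :=
    .of_linearEquiv (Submodule.Quotient.restrictScalarsEquiv R P)
  refine Submodule.restrictScalars_injective R _ _ ?_
  refine Submodule.eq_of_le_of_le_sup_smul_top_of_flat hI hQP ?_
  rwa [Ideal.smul_top_eq_map, ← Submodule.restrictScalars_sup]

lemma Ideal.Quotient.mk_mem_smul_top_iff (P : Ideal S) (I : Ideal R) {z : S} :
    Ideal.Quotient.mk P z ∈ I • (⊤ : Submodule R (S ⧸ P)) ↔ z ∈ P ⊔ I.map (algebraMap R S) := by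
  rw [Ideal.smul_top_eq_map, Submodule.restrictScalars_mem, IsScalarTower.algebraMap_eq R S,
    ← Ideal.map_map, Ideal.Quotient.algebraMap_eq, Ideal.mem_quotient_iff_mem_sup, sup_comm]

end Flat

theorem Ideal.exists_notMem_mul_eq_zero_of_mem_minimalPrimes {A : Type*} [CommRing A]
    [IsReduced A] {p : Ideal A} (hp : p ∈ minimalPrimes A) {x : A} (hx : x ∈ p) :
    ∃ s ∉ p, s * x = 0 := by
  have := hp.isPrime
  have hnil : algebraMap A (Localization.AtPrime p) x ∈ (⊥ : Ideal _).radical := by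
    rw [← Ideal.map_bot (f := algebraMap A (Localization.AtPrime p)),
      IsLocalization.AtPrime.radical_map_of_mem_minimalPrimes _ p ⊥ hp]
    exact Ideal.mem_map_of_mem _ hx
  obtain ⟨n, hn⟩ := hnil
  rw [Ideal.mem_bot, ← map_pow, IsLocalization.map_eq_zero_iff p.primeCompl] at hn
  obtain ⟨⟨s, hs⟩, hsx⟩ := hn
  refine ⟨s, hs, IsReduced.eq_zero _ ⟨n + 1, ?_⟩⟩
  calc (s * x) ^ (n + 1) = s ^ n * x * (s * x ^ n) := by ring
    _ = 0 := by rw [hsx, mul_zero]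

namespace Algebra.TensorProduct

lemma isLeftRegular_one_tmul {k C D : Type*} [CommRing k] [Ring C] [Ring D] [Algebra k C]
    [Algebra k D] [Module.Flat k C] {d : D} (hd : IsLeftRegular d) :
    IsLeftRegular ((1 : C) ⊗ₜ[k] d) := by
  have hmul : ((1 : C) ⊗ₜ[k] d * ·) = (LinearMap.mulLeft k d).lTensor C := by
    ext x
    induction x with
    | zero => simp
    | tmul c a => simp
    | add x y hx hy => simp [mul_add, hx, hy]
  rw [IsLeftRegular, hmul]
  exact Module.Flat.lTensor_preserves_injective_linearMap _ hd

variable {k R A : Type*} [CommRing k] [CommRing R] [CommRing A] [Algebra k R] [Algebra k A]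

lemma mem_map_sup_map_of_one_tmul_mul_mem {I : Ideal R} {p : Ideal A} [Module.Flat k (R ⧸ I)]
    {s : A} (hs : IsLeftRegular (Ideal.Quotient.mk p s)) {z : R ⊗[k] A}
    (hz : (1 ⊗ₜ s) * z ∈ I.map (includeLeft (S := k)) ⊔ p.map includeRight) :
    z ∈ I.map (includeLeft (S := k)) ⊔ p.map includeRight := by
  have hker := map_ker (Ideal.Quotient.mkₐ k I) (Ideal.Quotient.mkₐ k p)
    (Ideal.Quotient.mkₐ_surjective k I) (Ideal.Quotient.mkₐ_surjective k p)
  rw [AlgHom.ker_coe (Ideal.Quotient.mkₐ k I), AlgHom.ker_coe (Ideal.Quotient.mkₐ k p),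
    Ideal.Quotient.mkₐ_ker, Ideal.Quotient.mkₐ_ker] at hker
  rw [← hker, RingHom.mem_ker] at hz ⊢
  rw [map_mul, map_tmul, map_one] at hz
  exact isLeftRegular_one_tmul hs (hz.trans (mul_zero _).symm)

theorem map_includeRight_le_of_flat_of_sup_eq [IsReduced A] {p : Ideal A}
    (hp : p ∈ minimalPrimes A) {𝔪 : Ideal R} [𝔪.IsMaximal] [Module.Flat k (R ⧸ 𝔪)]
    (h𝔪 : IsNilpotent 𝔪) {P : Ideal (R ⊗[k] A)} [Module.Flat R ((R ⊗[k] A) ⧸ P)]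
    (hfiber : P ⊔ 𝔪.map (algebraMap R (R ⊗[k] A)) =
      p.map (includeRight (R := k) (A := R)).toRingHom ⊔ 𝔪.map (algebraMap R (R ⊗[k] A))) :
    p.map (includeRight (R := k) (A := R)).toRingHom ≤ P := by
  have := hp.isPrime
  rw [Ideal.map_le_iff_le_comap]
  intro x hx
  obtain ⟨s, hs, hsx⟩ := Ideal.exists_notMem_mul_eq_zero_of_mem_minimalPrimes hp hx
  have hreg : IsLeftRegular (Ideal.Quotient.mk p s) :=
    (IsRegular.of_ne_zero (by rwa [ne_eq, Ideal.Quotient.eq_zero_iff_mem])).left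
  let u := LinearMap.mulLeft R (Ideal.Quotient.mk P ((1 : R) ⊗ₜ[k] s))
  have hu : (𝔪 • ⊤ : Submodule R ((R ⊗[k] A) ⧸ P)).comap u ≤ 𝔪 • ⊤ := by
    intro z hz
    obtain ⟨z, rfl⟩ := Ideal.Quotient.mk_surjective z
    rw [Submodule.mem_comap, LinearMap.mulLeft_apply, ← map_mul,
      Ideal.Quotient.mk_mem_smul_top_iff, hfiber, sup_comm] at hz
    rw [Ideal.Quotient.mk_mem_smul_top_iff, hfiber, sup_comm]
    exact mem_map_sup_map_of_one_tmul_mul_mem hreg hz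
  rw [Ideal.mem_comap, ← Ideal.Quotient.eq_zero_iff_mem]
  refine LinearMap.injective_of_comap_smul_top_le_of_flat hu h𝔪 ?_
  simp [u, ← map_mul, hsx]

end Algebra.TensorProduct

theorem flat_deformation_of_minimal_prime_unique_general
    (k : Type*) [Field k]
    (A : Type*) [CommRing A] [Algebra k A] [IsReduced A]
    (p : Ideal A) (hp : p ∈ minimalPrimes A)
    (R : Type*) [CommRing R] [Algebra k R] [IsLocalRing R] [IsArtinianRing R]
    (P : Ideal (R ⊗[k] A))
    (hflat : Module.Flat R ((R ⊗[k] A) ⧸ P))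
    (hfiber : P ⊔ (IsLocalRing.maximalIdeal R).map (algebraMap R (R ⊗[k] A)) =
      p.map (Algebra.TensorProduct.includeRight (R := k) (A := R)).toRingHom ⊔
        (IsLocalRing.maximalIdeal R).map (algebraMap R (R ⊗[k] A))) :
    P = p.map (Algebra.TensorProduct.includeRight (R := k) (A := R)).toRingHom := by
  have h𝔪 : IsNilpotent (IsLocalRing.maximalIdeal R) :=
    (isArtinianRing_iff_isNilpotent_maximalIdeal R).mp ‹_›
  have hQP := Algebra.TensorProduct.map_includeRight_le_of_flat_of_sup_eq hp h𝔪 hfiber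
  exact (Ideal.eq_of_le_of_le_sup_map_of_flat h𝔪 hQP (hfiber ▸ le_sup_left)).symm

/-- **Lemma (uniqueness of flat lifts of minimal primes).** Let `A` be a reduced
Noetherian algebra over a field `k`, `p ⊂ A` a minimal prime, `(R, 𝔪)` a local
Artinian `k`-algebra with residue field `k`, and `P ⊆ A ⊗_k R` an ideal such that
`(A ⊗_k R)/P` is `R`-flat and `P + 𝔪(A ⊗ R) = p⊗R + 𝔪(A ⊗ R)` (so `(A ⊗ R)/P` is a
flat deformation of `A/p`). Then `P = p ⊗_k R`, the extension of `p`.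
(We write the base change as `R ⊗[k] A`.) -/
theorem flat_deformation_of_minimal_prime_unique
    (k : Type*) [Field k]
    (A : Type*) [CommRing A] [Algebra k A] [IsReduced A] [IsNoetherianRing A]
    (p : Ideal A) (hp : p ∈ minimalPrimes A)
    (R : Type*) [CommRing R] [Algebra k R] [IsLocalRing R] [IsArtinianRing R]
    (hres : Function.Bijective (algebraMap k (IsLocalRing.ResidueField R)))
    (P : Ideal (R ⊗[k] A))
    (hflat : Module.Flat R ((R ⊗[k] A) ⧸ P))
    (hfiber : P ⊔ (IsLocalRing.maximalIdeal R).map (algebraMap R (R ⊗[k] A)) =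
      p.map (Algebra.TensorProduct.includeRight (R := k) (A := R)).toRingHom ⊔
        (IsLocalRing.maximalIdeal R).map (algebraMap R (R ⊗[k] A))) :
    P = p.map (Algebra.TensorProduct.includeRight (R := k) (A := R)).toRingHom :=
  flat_deformation_of_minimal_prime_unique_general k A p hp R P hflat hfiber
end
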